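/- Let d ≥ 3, n ≥ 4, and let f be a homogeneous polynomial of degree d in n variables over ℂ of rank exactly n. If f has only finitely many singular points in P^{n−1}(ℂ), then f has at most one singular point; that is, a rank-n polynomial cannot have a finite number k ≥ 2 of singular points. -/
import Mathlib


open MvPolynomial

/-- The linear form with coefficient vector `v`. -/
noncomputable def linForm {n : ℕ} (v : Fin n → ℂ) : MvPolynomial (Fin n) ℂ :=
  ∑ i, C (v i) * X i

/-- `f` can be written as a sum of `r` `d`-th powers of linear forms. -/
def hasDecomp {n : ℕ} (d : ℕ) (f : MvPolynomial (Fin n) ℂ) (r : ℕ) : Prop :=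
  ∃ v : Fin r → Fin n → ℂ, f = ∑ j, (linForm (v j)) ^ d

/-- `f` has rank exactly `r` with respect to `d`-th powers of linear forms. -/
def hasRank {n : ℕ} (d : ℕ) (f : MvPolynomial (Fin n) ℂ) (r : ℕ) : Prop :=
  hasDecomp d f r ∧ ∀ s, s < r → ¬ hasDecomp d f s

lemma pderiv_linForm {n : ℕ} (w : Fin n → ℂ) (i : Fin n) :
    pderiv i (linForm w) = C (w i) := by
  simp [linForm, pderiv_C_mul, Pi.single_apply, mul_ite, Finset.sum_ite_eq']

lemma eval_linForm {n : ℕ} (w p : Fin n → ℂ) :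
    eval p (linForm w) = ∑ k, w k * p k := by
  simp [linForm]

lemma eval_pderiv_decomp {n d : ℕ} (v : Fin n → Fin n → ℂ) (p : Fin n → ℂ) (i : Fin n) :
    eval p (pderiv i (∑ j, (linForm (v j)) ^ d)) =
      (d : ℂ) * ∑ j, (∑ k, v j k * p k) ^ (d - 1) * v j i := by
  rw [map_sum, map_sum, Finset.mul_sum]
  refine Finset.sum_congr rfl fun j _ => ?_
  rw [pderiv_pow, pderiv_linForm]
  simp [eval_linForm]
  ring

theorem stmt12 {n d : ℕ} (hn : 4 ≤ n) (hd : 3 ≤ d)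
    (f : MvPolynomial (Fin n) ℂ) (hhom : f.IsHomogeneous d)
    (hrank : hasRank d f n)
    (hfin : {x : Projectivization ℂ (Fin n → ℂ) | ∀ i, eval x.rep (pderiv i f) = 0}.Finite) :
    {x : Projectivization ℂ (Fin n → ℂ) | ∀ i, eval x.rep (pderiv i f) = 0}.Subsingleton := by
  classical
  obtain ⟨⟨v, hf⟩, -⟩ := hrank
  set L : Fin n → (Fin n → ℂ) → ℂ := fun j p => ∑ k, v j k * p k with hL
  have hdne : (d : ℂ) ≠ 0 := by
    exact Nat.cast_ne_zero.mpr (by omega)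
  have hd1 : d - 1 ≠ 0 := by omega
  -- linearity of L
  have Lsmul : ∀ j (t : ℂ) (p : Fin n → ℂ), L j (t • p) = t * L j p := by
    intro j t p
    rw [hL, Finset.mul_sum]
    exact Finset.sum_congr rfl fun k _ => by simp; ring
  have Ladd : ∀ j (p q : Fin n → ℂ), L j (p + q) = L j p + L j q := by
    intro j p q
    simp only [hL, Pi.add_apply, mul_add]
    rw [Finset.sum_add_distrib]
  -- the singular condition in concrete form
  have hsing : ∀ p : Fin n → ℂ,
      (∀ i, eval p (pderiv i f) = 0) ↔ (∀ i, ∑ j, (L j p) ^ (d - 1) * v j i = 0) := by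
    intro p
    constructor <;> intro h i <;> have := h i <;>
      rw [hf, eval_pderiv_decomp] at * <;>
      simp only [hL] at *
    · exact (mul_eq_zero.mp this).resolve_left hdne
    · rw [this, mul_zero]
  -- the cone property
  have hcone : ∀ (p : Fin n → ℂ) (t : ℂ),
      (∀ i, ∑ j, (L j p) ^ (d - 1) * v j i = 0) →
      (∀ i, ∑ j, (L j (t • p)) ^ (d - 1) * v j i = 0) := by
    intro p t h i
    have : ∑ j, (L j (t • p)) ^ (d - 1) * v j i
        = t ^ (d - 1) * ∑ j, (L j p) ^ (d - 1) * v j i := by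
      rw [Finset.mul_sum]
      refine Finset.sum_congr rfl fun j _ => ?_
      rw [Lsmul, mul_pow]; ring
    rw [this, h i, mul_zero]
  intro x hx y hy
  by_contra hxy
  -- we will contradict finiteness by finding a line of singular points
  have key : ∃ u w : Fin n → ℂ,
      (∀ a b : ℂ, a • u + b • w = 0 → a = 0 ∧ b = 0) ∧
      (∀ c : ℂ, ∀ i, ∑ j, (L j (u + c • w)) ^ (d - 1) * v j i = 0) := by
    have hx' := (hsing x.rep).mp hx
    have hy' := (hsing y.rep).mp hy
    by_cases hall : (∀ j, L j x.rep = 0) ∧ (∀ j, L j y.rep = 0)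
    · refine ⟨x.rep, y.rep, ?_, ?_⟩
      · intro a b hab
        by_cases ha : a = 0
        · subst ha
          simp only [zero_smul, zero_add] at hab
          rcases smul_eq_zero.mp hab with hb | hb
          · exact ⟨rfl, hb⟩
          · exact absurd hb y.rep_nonzero
        · exfalso
          apply hxy
          have hrepx : x.rep = (-(b / a)) • y.rep := by
            have : a • x.rep = -(b • y.rep) := by
              rw [eq_neg_iff_add_eq_zero]; exact hab
            have := congrArg (fun z => a⁻¹ • z) this
            simpa [smul_smul, inv_mul_cancel₀ ha, neg_div, div_eq_inv_mul, mul_comm] using this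
          have : Projectivization.mk ℂ x.rep x.rep_nonzero
              = Projectivization.mk ℂ y.rep y.rep_nonzero :=
            (Projectivization.mk_eq_mk_iff' ℂ _ _ _ _).mpr ⟨-(b / a), hrepx.symm⟩
          rwa [Projectivization.mk_rep, Projectivization.mk_rep] at this
      · intro c i
        have : ∀ j, L j (x.rep + c • y.rep) = 0 := by
          intro j
          rw [Ladd, Lsmul, hall.1 j, hall.2 j, mul_zero, add_zero]
        refine Finset.sum_eq_zero fun j _ => ?_
        rw [this j, zero_pow hd1, zero_mul]
    · -- some singular representative has a nonvanishing linear form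
      have hex : ∃ r : Fin n → ℂ,
          (∀ i, ∑ j, (L j r) ^ (d - 1) * v j i = 0) ∧ ∃ j₀, L j₀ r ≠ 0 := by
        rcases not_and_or.mp hall with h | h <;> push_neg at h
        · exact ⟨x.rep, hx', h⟩
        · exact ⟨y.rep, hy', h⟩
      obtain ⟨r, hr, j₀, hj₀⟩ := hex
      -- the matrix of coefficient rows is singular
      set M : Matrix (Fin n) (Fin n) ℂ := Matrix.of (fun j i => v j i) with hM
      have hdet : M.det = 0 := by
        rw [← Matrix.exists_vecMul_eq_zero_iff]
        refine ⟨fun j => (L j r) ^ (d - 1), ?_, ?_⟩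
        · intro h0
          have := congrFun h0 j₀
          exact pow_ne_zero _ hj₀ this
        · funext i
          simpa [Matrix.vecMul, dotProduct, hM] using hr i
      obtain ⟨k, hk0, hk⟩ := Matrix.exists_mulVec_eq_zero_iff.mpr hdet
      have hkL : ∀ j, L j k = 0 := by
        intro j
        have := congrFun hk j
        simpa [Matrix.mulVec, dotProduct, hM, hL] using this
      refine ⟨r, k, ?_, ?_⟩
      · intro a b hab
        have ha : a = 0 := by
          have h1 : L j₀ (a • r + b • k) = a * L j₀ r := by
            rw [Ladd, Lsmul, Lsmul, hkL, mul_zero, add_zero]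
          rw [hab] at h1
          have h2 : L j₀ (0 : Fin n → ℂ) = 0 := by
            simp [hL]
          rw [h2] at h1
          rcases mul_eq_zero.mp h1.symm with h | h
          · exact h
          · exact absurd h hj₀
        subst ha
        simp only [zero_smul, zero_add] at hab
        rcases smul_eq_zero.mp hab with hb | hb
        · exact ⟨rfl, hb⟩
        · exact absurd hb hk0
      · intro c i
        have : ∀ j, L j (r + c • k) = L j r := by
          intro j
          rw [Ladd, Lsmul, hkL, mul_zero, add_zero]
        calc ∑ j, (L j (r + c • k)) ^ (d - 1) * v j i
            = ∑ j, (L j r) ^ (d - 1) * v j i :=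
              Finset.sum_congr rfl fun j _ => by rw [this j]
          _ = 0 := hr i
  obtain ⟨u, w, hind, hmem⟩ := key
  have hne : ∀ c : ℂ, u + c • w ≠ 0 := by
    intro c h
    have : (1 : ℂ) • u + c • w = 0 := by rwa [one_smul]
    exact one_ne_zero (hind 1 c this).1
  have hinf : {x : Projectivization ℂ (Fin n → ℂ) |
      ∀ i, eval x.rep (pderiv i f) = 0}.Infinite := by
    refine Set.infinite_of_injective_forall_mem
      (f := fun c : ℂ => Projectivization.mk ℂ (u + c • w) (hne c)) ?_ ?_
    · intro c c' hcc
      rw [Projectivization.mk_eq_mk_iff'] at hcc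
      obtain ⟨a, ha⟩ := hcc
      have h0 : (a - 1) • u + (a * c' - c) • w
          = a • (u + c' • w) - (u + c • w) := by
        module
      rw [ha, sub_self] at h0
      obtain ⟨h1, h2⟩ := hind _ _ h0
      have ha1 : a = 1 := by linear_combination h1
      have hcc' : a * c' = c := sub_eq_zero.mp h2
      rw [ha1, one_mul] at hcc'
      exact hcc'.symm
    · intro c
      rw [Set.mem_setOf_eq, hsing]
      obtain ⟨t, ht⟩ := Projectivization.exists_smul_eq_mk_rep ℂ (u + c • w) (hne c)
      rw [← ht]
      exact hcone _ _ (hmem c)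
  exact hinf hfin
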